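/- Let Λ₁, Λ₂ be n×M real matrices and let A, B be n×n real symmetric matrices satisfying, in the sense of quadratic forms on ℝ^{2n}, [[A, 0],[0, -B]] ≤ (1/ε)·[[I, -I],[-I, I]] for some ε > 0. Then tr(Λ₁Λ₁'A - Λ₂Λ₂'B) ≤ (1/ε)·‖Λ₁ - Λ₂‖_F², where ‖·‖_F is the Frobenius norm. -/
import Mathlib


open Matrix

lemma trace_col_sum {n M : ℕ} (Λ : Matrix (Fin n) (Fin M) ℝ)
    (A : Matrix (Fin n) (Fin n) ℝ) (hA : A.IsSymm) :
    (Λ * Λ.transpose * A).trace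
      = ∑ k : Fin M, (fun i => Λ i k) ⬝ᵥ A.mulVec (fun i => Λ i k) := by
  simp only [Matrix.trace, Matrix.diag, Matrix.mul_apply, Matrix.mulVec, dotProduct,
    Matrix.transpose_apply, Finset.sum_mul, Finset.mul_sum]
  have h : ∀ x : Fin n, ∑ x1 : Fin n, ∑ i : Fin M, Λ x i * Λ x1 i * A x1 x
      = ∑ i : Fin M, ∑ x1 : Fin n, Λ x i * Λ x1 i * A x1 x := fun x => Finset.sum_comm
  simp only [h]
  rw [Finset.sum_comm]
  refine Finset.sum_congr rfl fun k _ => Finset.sum_congr rfl fun i _ =>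
    Finset.sum_congr rfl fun j _ => by rw [hA.apply, mul_comm (A _ _), mul_assoc]

/-- Crandall–Ishii–Lions trace estimate: if `[[A,0],[0,-B]] ≤ (1/ε)[[I,-I],[-I,I]]`
as quadratic forms, then `tr(Λ₁Λ₁'A - Λ₂Λ₂'B) ≤ (1/ε)‖Λ₁ - Λ₂‖_F²`. -/
theorem stmt_5 (n M : ℕ) (Λ₁ Λ₂ : Matrix (Fin n) (Fin M) ℝ)
    (A B : Matrix (Fin n) (Fin n) ℝ) (hA : A.IsSymm) (hB : B.IsSymm)
    (ε : ℝ) (hε : 0 < ε)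
    (hAB : ∀ x y : Fin n → ℝ,
      x ⬝ᵥ A.mulVec x - y ⬝ᵥ B.mulVec y ≤ (1 / ε) * ∑ i, (x i - y i) ^ 2) :
    (Λ₁ * Λ₁.transpose * A - Λ₂ * Λ₂.transpose * B).trace
      ≤ (1 / ε) * ∑ i, ∑ j, (Λ₁ i j - Λ₂ i j) ^ 2 := by
  rw [Matrix.trace_sub, trace_col_sum _ _ hA, trace_col_sum _ _ hB, ← Finset.sum_sub_distrib]
  calc ∑ k : Fin M, ((fun i => Λ₁ i k) ⬝ᵥ A.mulVec (fun i => Λ₁ i k)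
        - (fun i => Λ₂ i k) ⬝ᵥ B.mulVec (fun i => Λ₂ i k))
      ≤ ∑ k : Fin M, (1 / ε) * ∑ i, (Λ₁ i k - Λ₂ i k) ^ 2 :=
        Finset.sum_le_sum fun k _ => hAB _ _
    _ = (1 / ε) * ∑ i, ∑ j, (Λ₁ i j - Λ₂ i j) ^ 2 := by
        rw [← Finset.mul_sum, Finset.sum_comm]
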